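/- arXiv:2204.01058 — 3 statements merged into one kernel-verified Lean document; each statement's English description precedes it below -/
import Mathlib

section
/- Let $K > 0$, let $(\xi, \eta)$ be independent centered Gaussians with $\mathrm{Var}[\xi] = 1-\epsilon$ and $\mathrm{Var}[\eta] = \epsilon$ for $\epsilon \in (0,1)$, and let $\sigma(t) = (a_-\mathbf{1}_{t<0} + a_+\mathbf{1}_{t>0})t$. Set $z_\alpha = \sqrt{K}(\xi + \eta)$, $z_\beta = \sqrt{K}(\xi - \eta)$ (so $(z_\alpha, z_\beta)$ are jointly Gaussian with common variance $K$ and correlation $1 - 2\epsilon$). Then $\mathbb{E}[\sigma(z_\alpha)\sigma(z_\beta)] = K a_+ a_- (1 - 2\epsilon) + \frac{K(a_+ - a_-)^2}{\pi} \left[ \sqrt{\epsilon(1-\epsilon)} + (1 - 2\epsilon) \cos^{-1}(\sqrt{\epsilon}) \right]$. -/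
open MeasureTheory ProbabilityTheory

section Aux
open Real Set Filter intervalIntegral
open scoped NNReal ENNReal

/-- The `1`-homogeneous non-linearity `σ(t) = (a₋ 𝟙_{t<0} + a₊ 𝟙_{t>0}) t`. -/
noncomputable def sigmaHom (am ap : ℝ) (t : ℝ) : ℝ :=
  (if t < 0 then am else if 0 < t then ap else 0) * t

lemma sigmaHom_eq (am ap t : ℝ) :
    sigmaHom am ap t = ((ap + am)/2) * t + ((ap - am)/2) * |t| := by
  unfold sigmaHom
  rcases lt_trichotomy t 0 with h|h|h
  · rw [if_pos h, abs_of_neg h]; ring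
  · subst h; simp
  · rw [if_neg (not_lt.mpr h.le), if_pos h, abs_of_pos h]; ring

lemma sigmaHom_smul (am ap : ℝ) {r : ℝ} (hr : 0 ≤ r) (t : ℝ) :
    sigmaHom am ap (r * t) = r * sigmaHom am ap t := by
  simp only [sigmaHom_eq, abs_mul, abs_of_nonneg hr]; ring

lemma measurable_sigmaHom (am ap : ℝ) : Measurable (sigmaHom am ap) := by
  unfold sigmaHom
  exact ((Measurable.ite measurableSet_Iio measurable_const
    (Measurable.ite measurableSet_Ioi measurable_const measurable_const))).mul measurable_id

lemma gaussianReal_eq_map (w : ℝ) (hw : 0 < w) :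
    gaussianReal 0 w.toNNReal = (gaussianReal 0 1).map (fun x => Real.sqrt w * x) := by
  have h := gaussianReal_map_const_mul (μ := 0) (v := 1) (Real.sqrt w)
  have h2 : (NNReal.mk (Real.sqrt w ^ 2) (sq_nonneg _) * 1 : ℝ≥0) = w.toNNReal := by
    ext
    simp [Real.sq_sqrt hw.le, Real.coe_toNNReal _ hw.le]
  rw [show (fun x => Real.sqrt w * x) = (Real.sqrt w * ·) from rfl, h, mul_zero, h2]

lemma gaussianPDF_std (x : ℝ) :
    gaussianPDF 0 1 x = ENNReal.ofReal ((Real.sqrt (2*π))⁻¹ * Real.exp (-(1/2) * x^2)) := by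
  rw [gaussianPDF_def, gaussianPDFReal_def]
  norm_num
  ring_nf

lemma std_prod_density :
    (gaussianReal 0 1).prod (gaussianReal 0 1) =
      (volume : Measure (ℝ × ℝ)).withDensity
        (fun p => ENNReal.ofReal ((2*π)⁻¹ * Real.exp (-(1/2) * (p.1^2 + p.2^2)))) := by
  have hφ : Measurable fun x : ℝ => ENNReal.ofReal ((Real.sqrt (2*π))⁻¹ * Real.exp (-(1/2) * x^2)) := by
    apply Measurable.ennreal_ofReal
    fun_prop
  refine Measure.prod_eq fun s t hs ht => ?_
  rw [withDensity_apply _ (hs.prod ht), Measure.volume_eq_prod, ← Measure.prod_restrict]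
  have hpt : ∀ p : ℝ × ℝ, ENNReal.ofReal ((2*π)⁻¹ * Real.exp (-(1/2) * (p.1^2 + p.2^2)))
      = ENNReal.ofReal ((Real.sqrt (2*π))⁻¹ * Real.exp (-(1/2) * p.1^2)) *
        ENNReal.ofReal ((Real.sqrt (2*π))⁻¹ * Real.exp (-(1/2) * p.2^2)) := by
    intro p
    rw [← ENNReal.ofReal_mul (by positivity)]
    congr 1
    rw [show ((Real.sqrt (2*π))⁻¹ * Real.exp (-(1/2) * p.1^2)) * ((Real.sqrt (2*π))⁻¹ * Real.exp (-(1/2) * p.2^2))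
        = ((Real.sqrt (2*π)) * Real.sqrt (2*π))⁻¹ * (Real.exp (-(1/2) * p.1^2) * Real.exp (-(1/2) * p.2^2)) by
      rw [mul_inv]; ring]
    rw [Real.mul_self_sqrt (by positivity), ← Real.exp_add]
    congr 1
    ring
  simp_rw [hpt]
  rw [lintegral_prod_mul hφ.aemeasurable hφ.aemeasurable]
  rw [gaussianReal_apply 0 one_ne_zero s, gaussianReal_apply 0 one_ne_zero t]
  simp_rw [gaussianPDF_std]

lemma gauss_prod_polar (v w : ℝ) (hv : 0 < v) (hw : 0 < w) {F : ℝ × ℝ → ℝ} (hF : Measurable F) :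
    ∫ p : ℝ × ℝ, F p ∂((gaussianReal 0 v.toNNReal).prod (gaussianReal 0 w.toNNReal)) =
    ∫ p in polarCoord.target,
      p.1 * ((2*π)⁻¹ * Real.exp (-(1/2) * p.1^2) *
        F (Real.sqrt v * (p.1 * Real.cos p.2), Real.sqrt w * (p.1 * Real.sin p.2))) := by
  have hm1 : Measurable fun x : ℝ => Real.sqrt v * x := measurable_const_mul _
  have hm2 : Measurable fun x : ℝ => Real.sqrt w * x := measurable_const_mul _
  rw [gaussianReal_eq_map v hv, gaussianReal_eq_map w hw,
    Measure.map_prod_map _ _ hm1 hm2,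
    integral_map (hm1.prodMap hm2).aemeasurable hF.aestronglyMeasurable]
  have h1 : ∀ p : ℝ × ℝ, F (Prod.map (fun x => Real.sqrt v * x) (fun x => Real.sqrt w * x) p)
      = F (Real.sqrt v * p.1, Real.sqrt w * p.2) := fun p => rfl
  simp_rw [h1]
  rw [std_prod_density]
  have hd : Measurable fun p : ℝ × ℝ => ((2*π)⁻¹ * Real.exp (-(1/2) * (p.1^2 + p.2^2))).toNNReal := by
    apply Measurable.real_toNNReal; fun_prop
  have hwd : ((volume : Measure (ℝ × ℝ)).withDensity
        (fun p => ENNReal.ofReal ((2*π)⁻¹ * Real.exp (-(1/2) * (p.1^2 + p.2^2)))))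
      = ((volume : Measure (ℝ × ℝ)).withDensity
        (fun p => (((2*π)⁻¹ * Real.exp (-(1/2) * (p.1^2 + p.2^2))).toNNReal : ℝ≥0∞))) := rfl
  rw [hwd, integral_withDensity_eq_integral_smul hd]
  rw [← integral_comp_polarCoord_symm]
  refine setIntegral_congr_fun polarCoord.open_target.measurableSet fun p _ => ?_
  rw [polarCoord_symm_apply]
  simp only [NNReal.smul_def, smul_eq_mul]
  have harg : (p.1 * Real.cos p.2)^2 + (p.1 * Real.sin p.2)^2 = p.1^2 := by
    rw [mul_pow, mul_pow, ← mul_add, add_comm, Real.sin_sq_add_cos_sq, mul_one]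
  rw [harg]
  rw [Real.coe_toNNReal _ (by positivity)]

lemma radial_integral : ∫ r in Ioi (0:ℝ), r^3 * Real.exp (-(1/2) * r^2) = 2 := by
  have hint : IntegrableOn (fun r : ℝ => r^3 * Real.exp (-(1/2) * r^2)) (Ioi 0) := by
    have h := integrable_rpow_mul_exp_neg_mul_sq (by norm_num : (0:ℝ) < 1/2)
      (by norm_num : (-1:ℝ) < 3)
    have h2 : (fun x : ℝ => x ^ (3:ℝ) * Real.exp (-(1/2) * x^2))
        = fun x : ℝ => x^3 * Real.exp (-(1/2) * x^2) := by
      funext x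
      rw [show (3:ℝ) = ((3:ℕ):ℝ) by norm_num, Real.rpow_natCast]
    rw [h2] at h
    exact h.integrableOn
  have hderiv : ∀ x ∈ Ioi (0:ℝ), HasDerivAt (fun r : ℝ => -(r^2+2) * Real.exp (-(1/2) * r^2))
      (x^3 * Real.exp (-(1/2) * x^2)) x := by
    intro x _
    have h1 : HasDerivAt (fun r : ℝ => -(1/2) * r^2) (-(1/2) * (2 * x^1)) x :=
      (hasDerivAt_pow 2 x).const_mul _
    have h2 : HasDerivAt (fun r : ℝ => Real.exp (-(1/2) * r^2))
        (Real.exp (-(1/2) * x^2) * (-(1/2) * (2 * x^1))) x := h1.exp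
    have h3 : HasDerivAt (fun r : ℝ => -(r^2+2)) (-(2 * x^1)) x :=
      ((hasDerivAt_pow 2 x).add_const 2).neg
    have h4 := h3.mul h2
    refine h4.congr_deriv ?_
    ring
  have htend : Tendsto (fun r : ℝ => -(r^2+2) * Real.exp (-(1/2) * r^2)) atTop (nhds 0) := by
    have hg : Tendsto (fun y : ℝ => -(2*(y * Real.exp (-y)) + 2 * Real.exp (-y))) atTop (nhds 0) := by
      have t1 : Tendsto (fun y : ℝ => y * Real.exp (-y)) atTop (nhds 0) := by
        have := Real.tendsto_pow_mul_exp_neg_atTop_nhds_zero 1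
        simpa using this
      have t2 : Tendsto (fun y : ℝ => Real.exp (-y)) atTop (nhds 0) :=
        Real.tendsto_exp_neg_atTop_nhds_zero
      have := ((t1.const_mul 2).add (t2.const_mul 2)).neg
      simpa using this
    have hu : Tendsto (fun r : ℝ => (1/2) * r^2) atTop atTop := by
      apply Tendsto.const_mul_atTop (by norm_num : (0:ℝ) < 1/2)
      exact tendsto_pow_atTop (by norm_num)
    have := hg.comp hu
    convert this using 2 with r
    simp only [Function.comp_apply]
    rw [show -((1:ℝ)/2 * r^2) = -(1/2) * r^2 by ring]
    ring
  have := integral_Ioi_of_hasDerivAt_of_tendsto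
    (by fun_prop : Continuous fun r : ℝ => -(r^2+2) * Real.exp (-(1/2) * r^2)).continuousWithinAt
    hderiv hint htend
  rw [this]
  norm_num

lemma hasDerivAt_F (ε θ : ℝ) :
    HasDerivAt (fun θ : ℝ => (1/2 - ε) * θ + Real.sin θ * Real.cos θ / 2)
      (Real.cos θ ^ 2 - ε) θ := by
  have h1 : HasDerivAt (fun θ : ℝ => Real.sin θ * Real.cos θ)
      (Real.cos θ * Real.cos θ + Real.sin θ * (-Real.sin θ)) θ :=
    (Real.hasDerivAt_sin θ).mul (Real.hasDerivAt_cos θ)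
  have h2 : HasDerivAt (fun θ : ℝ => (1/2 - ε) * θ) ((1/2 - ε) * 1) θ :=
    (hasDerivAt_id θ).const_mul _
  have h3 := h2.add (h1.div_const 2)
  refine h3.congr_deriv ?_
  have hs := Real.sin_sq_add_cos_sq θ
  nlinarith [hs]

lemma abs_integral (ε : ℝ) (hε0 : 0 < ε) (hε1 : ε < 1) :
    ∫ θ in (-π)..π, |Real.cos θ ^ 2 - ε|
      = (1-2*ε) * (4 * Real.arccos (Real.sqrt ε) - π) + 4 * Real.sqrt (ε*(1-ε)) := by
  set t₀ := Real.arccos (Real.sqrt ε) with ht₀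
  have hsε0 : 0 ≤ Real.sqrt ε := Real.sqrt_nonneg _
  have hsε1 : Real.sqrt ε ≤ 1 := by
    rw [show (1:ℝ) = Real.sqrt 1 by simp]
    exact Real.sqrt_le_sqrt hε1.le
  have hcos : Real.cos t₀ = Real.sqrt ε := Real.cos_arccos (by linarith) hsε1
  have hsin : Real.sin t₀ = Real.sqrt (1-ε) := by
    rw [ht₀, Real.sin_arccos, Real.sq_sqrt hε0.le]
  have ht0 : 0 ≤ t₀ := Real.arccos_nonneg _
  have ht2 : t₀ ≤ π/2 := by rw [ht₀]; exact Real.arccos_le_pi_div_two.mpr hsε0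
  have hπ := Real.pi_pos
  have hcont : Continuous fun θ : ℝ => |Real.cos θ ^ 2 - ε| := by fun_prop
  have hcont2 : Continuous fun θ : ℝ => Real.cos θ ^ 2 - ε := by fun_prop
  have hii : ∀ a b : ℝ, IntervalIntegrable (fun θ : ℝ => |Real.cos θ ^ 2 - ε|) volume a b :=
    fun a b => hcont.intervalIntegrable a b
  have hii2 : ∀ a b : ℝ, IntervalIntegrable (fun θ : ℝ => Real.cos θ ^ 2 - ε) volume a b :=
    fun a b => hcont2.intervalIntegrable a b
  have hmss : Real.sqrt ε * Real.sqrt (1-ε) = Real.sqrt (ε * (1-ε)) :=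
    (Real.sqrt_mul hε0.le _).symm
  have ftc : ∀ a b : ℝ, ∫ θ in a..b, (Real.cos θ ^ 2 - ε)
      = ((1/2 - ε) * b + Real.sin b * Real.cos b / 2) - ((1/2 - ε) * a + Real.sin a * Real.cos a / 2) :=
    fun a b => integral_eq_sub_of_hasDerivAt (fun x _ => hasDerivAt_F ε x) (hii2 a b)
  have heven : ∫ θ in (-π)..(0:ℝ), |Real.cos θ ^ 2 - ε| = ∫ θ in (0:ℝ)..π, |Real.cos θ ^ 2 - ε| := by
    have h := intervalIntegral.integral_comp_neg (a := 0) (b := π)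
      (fun θ : ℝ => |Real.cos θ ^ 2 - ε|)
    simp only [Real.cos_neg, neg_zero] at h
    rw [← h]
  have hsplit : ∫ θ in (-π)..π, |Real.cos θ ^ 2 - ε|
      = (∫ θ in (-π)..(0:ℝ), |Real.cos θ ^ 2 - ε|) + ∫ θ in (0:ℝ)..π, |Real.cos θ ^ 2 - ε| :=
    (intervalIntegral.integral_add_adjacent_intervals (hii _ _) (hii _ _)).symm
  have hsplit2 : ∫ θ in (0:ℝ)..π, |Real.cos θ ^ 2 - ε|
      = (∫ θ in (0:ℝ)..t₀, |Real.cos θ ^ 2 - ε|) + ((∫ θ in t₀..(π - t₀), |Real.cos θ ^ 2 - ε|)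
        + ∫ θ in (π - t₀)..π, |Real.cos θ ^ 2 - ε|) := by
    rw [intervalIntegral.integral_add_adjacent_intervals (hii _ _) (hii _ _),
      intervalIntegral.integral_add_adjacent_intervals (hii _ _) (hii _ _)]
  have hp1 : ∫ θ in (0:ℝ)..t₀, |Real.cos θ ^ 2 - ε| = ∫ θ in (0:ℝ)..t₀, (Real.cos θ ^ 2 - ε) := by
    refine intervalIntegral.integral_congr fun θ hθ => ?_
    rw [uIcc_of_le ht0] at hθ
    have h1 : Real.sqrt ε ≤ Real.cos θ := by
      rw [← hcos]
      exact Real.cos_le_cos_of_nonneg_of_le_pi hθ.1 (by linarith) hθ.2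
    have : ε ≤ Real.cos θ ^ 2 := by nlinarith [Real.sq_sqrt hε0.le]
    exact abs_of_nonneg (by linarith)
  have hp2 : ∫ θ in t₀..(π - t₀), |Real.cos θ ^ 2 - ε|
      = ∫ θ in t₀..(π - t₀), -(Real.cos θ ^ 2 - ε) := by
    refine intervalIntegral.integral_congr fun θ hθ => ?_
    rw [uIcc_of_le (by linarith)] at hθ
    have h1 : Real.cos θ ≤ Real.sqrt ε := by
      rw [← hcos]
      exact Real.cos_le_cos_of_nonneg_of_le_pi ht0 (by linarith [hθ.2]) hθ.1
    have h2 : -Real.sqrt ε ≤ Real.cos θ := by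
      rw [← hcos, ← Real.cos_pi_sub]
      exact Real.cos_le_cos_of_nonneg_of_le_pi (by linarith [hθ.1]) (by linarith) hθ.2
    have : Real.cos θ ^ 2 ≤ ε := by nlinarith [Real.sq_sqrt hε0.le]
    rw [abs_of_nonpos (by linarith)]
  have hp3 : ∫ θ in (π - t₀)..π, |Real.cos θ ^ 2 - ε|
      = ∫ θ in (π - t₀)..π, (Real.cos θ ^ 2 - ε) := by
    refine intervalIntegral.integral_congr fun θ hθ => ?_
    rw [uIcc_of_le (by linarith)] at hθ
    have h1 : Real.cos θ ≤ -Real.sqrt ε := by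
      rw [← hcos, ← Real.cos_pi_sub]
      exact Real.cos_le_cos_of_nonneg_of_le_pi (by linarith) hθ.2 hθ.1
    have : ε ≤ Real.cos θ ^ 2 := by nlinarith [Real.sq_sqrt hε0.le]
    exact abs_of_nonneg (by linarith)
  rw [hsplit, heven, hsplit2, hp1, hp2, hp3, intervalIntegral.integral_neg, ftc, ftc, ftc]
  rw [Real.sin_pi_sub, Real.cos_pi_sub, hsin, hcos, Real.sin_pi, Real.cos_pi, Real.sin_zero,
    Real.cos_zero]
  rw [← hmss]
  ring

lemma angular_integral (ε am ap : ℝ) (hε0 : 0 < ε) (hε1 : ε < 1) :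
    ∫ θ in Ioo (-π) π, sigmaHom am ap (Real.sqrt (1-ε) * Real.cos θ + Real.sqrt ε * Real.sin θ) *
        sigmaHom am ap (Real.sqrt (1-ε) * Real.cos θ - Real.sqrt ε * Real.sin θ)
      = ((ap+am)/2)^2 * (π * (1-2*ε)) +
        ((ap-am)/2)^2 * ((1-2*ε) * (4 * Real.arccos (Real.sqrt ε) - π) + 4 * Real.sqrt (ε*(1-ε))) := by
  have hπ := Real.pi_pos
  set c1 := (ap+am)/2
  set c2 := (ap-am)/2
  set c : ℝ → ℝ := fun θ => Real.sqrt (1-ε) * Real.cos θ + Real.sqrt ε * Real.sin θ with hc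
  set d : ℝ → ℝ := fun θ => Real.sqrt (1-ε) * Real.cos θ - Real.sqrt ε * Real.sin θ with hd
  have hcd : ∀ θ, c θ * d θ = Real.cos θ ^ 2 - ε := by
    intro θ
    have h1 : Real.sqrt (1-ε) ^ 2 = 1 - ε := Real.sq_sqrt (by linarith)
    have h2 : Real.sqrt ε ^ 2 = ε := Real.sq_sqrt hε0.le
    have h3 := Real.sin_sq_add_cos_sq θ
    simp only [hc, hd]
    nlinarith [h1, h2, h3]
  set W : ℝ → ℝ := fun θ => c θ * |d θ| + |c θ| * d θ with hW
  have hcont_c : Continuous c := by fun_prop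
  have hcont_d : Continuous d := by fun_prop
  have hexp : ∀ θ, sigmaHom am ap (c θ) * sigmaHom am ap (d θ)
      = c1^2 * (Real.cos θ ^ 2 - ε) + c1*c2 * W θ + c2^2 * |Real.cos θ ^ 2 - ε| := by
    intro θ
    rw [sigmaHom_eq, sigmaHom_eq, ← hcd θ, abs_mul]
    simp only [hW]
    ring
  rw [← integral_Ioc_eq_integral_Ioo, ← intervalIntegral.integral_of_le (by linarith)]
  simp_rw [show ∀ θ, sigmaHom am ap (Real.sqrt (1-ε) * Real.cos θ + Real.sqrt ε * Real.sin θ) * sigmaHom am ap (Real.sqrt (1-ε) * Real.cos θ - Real.sqrt ε * Real.sin θ) = c1^2 * (Real.cos θ ^ 2 - ε) + c1*c2 * W θ + c2^2 * |Real.cos θ ^ 2 - ε| from hexp]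
  have hiW : ∀ a b : ℝ, IntervalIntegrable W volume a b := fun a b =>
    ((hcont_c.mul hcont_d.abs).add (hcont_c.abs.mul hcont_d)).intervalIntegrable a b
  have hiA : ∀ a b : ℝ, IntervalIntegrable (fun θ : ℝ => |Real.cos θ ^ 2 - ε|) volume a b :=
    fun a b => (by fun_prop : Continuous fun θ : ℝ => |Real.cos θ ^ 2 - ε|).intervalIntegrable a b
  have hiC : ∀ a b : ℝ, IntervalIntegrable (fun θ : ℝ => Real.cos θ ^ 2 - ε) volume a b :=
    fun a b => (by fun_prop : Continuous fun θ : ℝ => Real.cos θ ^ 2 - ε).intervalIntegrable a b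
  rw [intervalIntegral.integral_add, intervalIntegral.integral_add]
  rotate_left
  · exact ((hiC _ _).const_mul _)
  · exact ((hiW _ _).const_mul _)
  · exact (((hiC _ _).const_mul _).add ((hiW _ _).const_mul _))
  · exact ((hiA _ _).const_mul _)
  rw [intervalIntegral.integral_const_mul, intervalIntegral.integral_const_mul,
    intervalIntegral.integral_const_mul]
  have hWodd : ∀ θ, W (θ - π) = -W θ := by
    intro θ
    have h1 : c (θ - π) = -c θ := by simp [hc, Real.cos_sub, Real.sin_sub]; ring
    have h2 : d (θ - π) = -d θ := by simp [hd, Real.cos_sub, Real.sin_sub]; ring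
    simp [hW, h1, h2]
    ring
  have hWint : ∫ θ in (-π)..π, W θ = 0 := by
    have hadj := intervalIntegral.integral_add_adjacent_intervals (a := -π) (b := 0) (c := π)
      (hiW _ _) (hiW _ _)
    have hshift := intervalIntegral.integral_comp_sub_right (a := 0) (b := π) W π
    simp only [zero_sub, sub_self] at hshift
    have hcongr : ∫ θ in (0:ℝ)..π, W (θ - π) = ∫ θ in (0:ℝ)..π, -W θ :=
      intervalIntegral.integral_congr fun θ _ => hWodd θ
    rw [hcongr, intervalIntegral.integral_neg] at hshift
    linarith [hadj, hshift]
  have hCint : ∫ θ in (-π)..π, (Real.cos θ ^ 2 - ε) = π * (1-2*ε) := by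
    have hc2 : IntervalIntegrable (fun θ : ℝ => Real.cos θ ^ 2) volume (-π) π :=
      (by fun_prop : Continuous fun θ : ℝ => Real.cos θ ^ 2).intervalIntegrable _ _
    rw [intervalIntegral.integral_sub hc2 intervalIntegrable_const, integral_cos_sq,
      intervalIntegral.integral_const]
    simp [Real.sin_pi, Real.cos_pi]
    ring
  rw [hWint, hCint, abs_integral ε hε0 hε1]
  ring

end Aux

open Real Set in
/-- covariance propagation for `1`-homogeneous activations.  With
`ξ ∼ 𝒩(0, 1-ε)` and `η ∼ 𝒩(0, ε)` independent, `z_α = √K (ξ+η)`, `z_β = √K (ξ-η)`,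
one has the exact formula for `𝔼[σ(z_α) σ(z_β)]`. -/
theorem stmt9 (K : ℝ) (hK : 0 < K) (ε : ℝ) (hε : ε ∈ Set.Ioo (0 : ℝ) 1) (am ap : ℝ) :
    ∫ p : ℝ × ℝ,
        sigmaHom am ap (Real.sqrt K * (p.1 + p.2)) *
          sigmaHom am ap (Real.sqrt K * (p.1 - p.2))
        ∂ ((gaussianReal 0 (1 - ε).toNNReal).prod (gaussianReal 0 ε.toNNReal)) =
      K * ap * am * (1 - 2 * ε) +
        K * (ap - am) ^ 2 / Real.pi *
          (Real.sqrt (ε * (1 - ε)) + (1 - 2 * ε) * Real.arccos (Real.sqrt ε)) := by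
  obtain ⟨hε0, hε1⟩ := hε
  have hπ := Real.pi_pos
  have hF : Measurable fun p : ℝ × ℝ =>
      sigmaHom am ap (Real.sqrt K * (p.1 + p.2)) * sigmaHom am ap (Real.sqrt K * (p.1 - p.2)) :=
    ((measurable_sigmaHom am ap).comp ((measurable_fst.add measurable_snd).const_mul _)).mul
      ((measurable_sigmaHom am ap).comp ((measurable_fst.sub measurable_snd).const_mul _))
  rw [gauss_prod_polar (1-ε) ε (by linarith) hε0 hF]
  rw [polarCoord_target]
  have hKK : Real.sqrt K * Real.sqrt K = K := Real.mul_self_sqrt hK.le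
  rw [setIntegral_congr_fun (measurableSet_Ioi.prod measurableSet_Ioo)
    (g := fun p : ℝ × ℝ => ((2*π)⁻¹ * (p.1^3 * Real.exp (-(1/2) * p.1^2))) *
      (K * (sigmaHom am ap (Real.sqrt (1-ε) * Real.cos p.2 + Real.sqrt ε * Real.sin p.2) *
        sigmaHom am ap (Real.sqrt (1-ε) * Real.cos p.2 - Real.sqrt ε * Real.sin p.2))))
    (fun p hp => ?_)]
  · rw [Measure.volume_eq_prod, MeasureTheory.setIntegral_prod_mul
      (f := fun r : ℝ => (2*π)⁻¹ * (r^3 * Real.exp (-(1/2) * r^2)))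
      (g := fun θ : ℝ => K * (sigmaHom am ap (Real.sqrt (1-ε) * Real.cos θ + Real.sqrt ε * Real.sin θ) *
        sigmaHom am ap (Real.sqrt (1-ε) * Real.cos θ - Real.sqrt ε * Real.sin θ)))]
    rw [MeasureTheory.integral_const_mul, MeasureTheory.integral_const_mul, radial_integral,
      angular_integral ε am ap hε0 hε1]
    field_simp
    ring
  · have hr0 : (0:ℝ) < p.1 := hp.1
    have hr : 0 ≤ Real.sqrt K * p.1 := mul_nonneg (Real.sqrt_nonneg _) hr0.le
    rw [show Real.sqrt K * (Real.sqrt (1-ε) * (p.1 * Real.cos p.2) + Real.sqrt ε * (p.1 * Real.sin p.2))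
        = (Real.sqrt K * p.1) * (Real.sqrt (1-ε) * Real.cos p.2 + Real.sqrt ε * Real.sin p.2) by ring,
      show Real.sqrt K * (Real.sqrt (1-ε) * (p.1 * Real.cos p.2) - Real.sqrt ε * (p.1 * Real.sin p.2))
        = (Real.sqrt K * p.1) * (Real.sqrt (1-ε) * Real.cos p.2 - Real.sqrt ε * Real.sin p.2) by ring,
      sigmaHom_smul _ _ hr, sigmaHom_smul _ _ hr]
    linear_combination ((2*π)⁻¹ * p.1^3 * Real.exp (-(1/2) * p.1^2) *
      sigmaHom am ap (Real.sqrt (1-ε) * Real.cos p.2 + Real.sqrt ε * Real.sin p.2) *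
      sigmaHom am ap (Real.sqrt (1-ε) * Real.cos p.2 - Real.sqrt ε * Real.sin p.2)) * hKK
end

section
/- Define $\epsilon^{(\ell+1)} = f(\epsilon^{(\ell)})$ where $f(\epsilon) = \frac{1}{2}\left(1 - \frac{2}{\pi}\left[\sqrt{\epsilon(1-\epsilon)} + (1-2\epsilon)\cos^{-1}(\sqrt{\epsilon})\right]\right)$ for $\epsilon \in [0,1]$ (corresponding to ReLU, $a_- = 0, a_+ = 1$ at criticality). Then for small $\epsilon$, $f(\epsilon) = \epsilon - \frac{4}{3\pi}\epsilon^{3/2} + O(\epsilon^{5/2})$. -/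
open Real

noncomputable def reluEpsMap (ε : ℝ) : ℝ :=
  (1 - 2 / Real.pi *
    (Real.sqrt (ε * (1 - ε)) + (1 - 2 * ε) * Real.arccos (Real.sqrt ε))) / 2

lemma sqrt_lb {x : ℝ} (h0 : 0 ≤ x) (h1 : x ≤ 1/2) : (1:ℝ)/2 ≤ Real.sqrt (1 - x^2) := by
  have h : (1:ℝ)/4 ≤ 1 - x^2 := by nlinarith
  calc (1:ℝ)/2 = Real.sqrt ((1/2)^2) := by rw [Real.sqrt_sq]; norm_num
  _ ≤ _ := Real.sqrt_le_sqrt (by nlinarith)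

lemma sqrt_lb' {x : ℝ} (h0 : 0 ≤ x) (h1 : x ≤ 1/2) : 1 - x^2 ≤ Real.sqrt (1 - x^2) := by
  rw [show Real.sqrt (1 - x^2) = (1-x^2) ^ ((1:ℝ)/2) from Real.sqrt_eq_rpow _]
  nth_rewrite 1 [show (1:ℝ) - x^2 = ((1-x^2)^((1:ℝ)/2))^2 by
    rw [← Real.rpow_natCast ((1-x^2)^((1:ℝ)/2)) 2, ← Real.rpow_mul (by nlinarith)]; norm_num]
  nlinarith [Real.rpow_nonneg (show (0:ℝ) ≤ 1 - x^2 by nlinarith) ((1:ℝ)/2),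
    Real.rpow_le_one (show (0:ℝ) ≤ 1 - x^2 by nlinarith) (by nlinarith) (show (0:ℝ) ≤ 1/2 by norm_num)]

lemma arcsin_taylor {t : ℝ} (h0 : 0 ≤ t) (h1 : t ≤ 1/2) : |Real.arcsin t - t| ≤ 2 * t^3 := by
  have key : ∀ x ∈ Set.Icc (0:ℝ) t, HasDerivWithinAt (fun y => Real.arcsin y - y)
      (1 / Real.sqrt (1 - x^2) - 1) (Set.Icc 0 t) x := by
    intro x hx
    have hx1 : x < 1 := lt_of_le_of_lt (hx.2.trans h1) (by norm_num)
    have hxm : (-1:ℝ) < x := lt_of_lt_of_le (by norm_num) hx.1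
    exact ((Real.hasDerivAt_arcsin hxm.ne' hx1.ne).sub (hasDerivAt_id x)).hasDerivWithinAt
  have bd : ∀ x ∈ Set.Icc (0:ℝ) t, ‖1 / Real.sqrt (1 - x^2) - 1‖ ≤ 2 * t^2 := by
    intro x hx
    have hx1 : x ≤ 1/2 := hx.2.trans h1
    have hs := sqrt_lb hx.1 hx1
    have hs' := sqrt_lb' hx.1 hx1
    have hle : Real.sqrt (1 - x^2) ≤ 1 := Real.sqrt_le_one.mpr (by nlinarith)
    have hpos : (0:ℝ) < Real.sqrt (1 - x^2) := by linarith
    have h2 : 1 / Real.sqrt (1 - x^2) - 1 ≤ 2 * x^2 := by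
      rw [div_sub' hpos.ne', div_le_iff₀ hpos]
      nlinarith
    have h3 : 0 ≤ 1 / Real.sqrt (1 - x^2) - 1 := by
      rw [sub_nonneg, le_div_iff₀ hpos]; linarith
    rw [Real.norm_eq_abs, abs_of_nonneg h3]
    nlinarith [hx.1, hx.2]
  have := Convex.norm_image_sub_le_of_norm_hasDerivWithin_le key bd (convex_Icc 0 t)
    (Set.left_mem_Icc.mpr h0) (Set.right_mem_Icc.mpr h0)
  simp only [Real.arcsin_zero, sub_zero, Real.norm_eq_abs] at this
  rw [abs_of_nonneg h0] at this
  calc |Real.arcsin t - t| ≤ 2 * t^2 * t := this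
  _ = 2 * t^3 := by ring

noncomputable def hFun (s : ℝ) : ℝ :=
  s * Real.sqrt (1 - s^2) - (1 - 2*s^2) * Real.arcsin s - 4/3 * s^3

lemma hasDerivAt_hFun {x : ℝ} (hxm : -1 < x) (hx1 : x < 1) :
    HasDerivAt hFun (4 * x * (Real.arcsin x - x)) x := by
  have hu : (0:ℝ) < 1 - x^2 := by nlinarith
  have hsu : (0:ℝ) < Real.sqrt (1 - x^2) := Real.sqrt_pos.mpr hu
  have d1 : HasDerivAt (fun y : ℝ => 1 - y^2) (-(2*x)) x := by
    simpa using ((hasDerivAt_pow 2 x).const_sub 1)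
  have d2 : HasDerivAt (fun y : ℝ => Real.sqrt (1 - y^2)) (-(2*x) / (2 * Real.sqrt (1 - x^2))) x :=
    d1.sqrt hu.ne'
  have d3 : HasDerivAt (fun y : ℝ => y * Real.sqrt (1 - y^2))
      (1 * Real.sqrt (1 - x^2) + x * (-(2*x) / (2 * Real.sqrt (1 - x^2)))) x :=
    (hasDerivAt_id x).mul d2
  have d4 : HasDerivAt (fun y : ℝ => (1 - 2*y^2) * Real.arcsin y)
      ((-(2*(2*x))) * Real.arcsin x + (1 - 2*x^2) * (1 / Real.sqrt (1 - x^2))) x := by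
    have da := Real.hasDerivAt_arcsin hxm.ne' hx1.ne
    have dp : HasDerivAt (fun y : ℝ => 1 - 2*y^2) (-(2*(2*x))) x := by
      have := ((hasDerivAt_pow 2 x).const_mul (2:ℝ)).const_sub 1
      simpa using this
    exact dp.mul da
  have d5 : HasDerivAt (fun y : ℝ => 4/3 * y^3) (4/3 * (3 * x^2)) x := by
    simpa using (hasDerivAt_pow 3 x).const_mul (4/3 : ℝ)
  have : HasDerivAt hFun _ x := (d3.sub d4).sub d5
  convert this using 1
  have hsq : Real.sqrt (1 - x^2) * Real.sqrt (1 - x^2) = 1 - x^2 := Real.mul_self_sqrt hu.le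
  field_simp
  nlinarith [hsq]

lemma hFun_bound {s : ℝ} (h0 : 0 ≤ s) (h1 : s ≤ 1/2) : |hFun s| ≤ 8 * s^5 := by
  have key : ∀ x ∈ Set.Icc (0:ℝ) s, HasDerivWithinAt hFun (4 * x * (Real.arcsin x - x))
      (Set.Icc 0 s) x := by
    intro x hx
    have hx1 : x < 1 := lt_of_le_of_lt (hx.2.trans h1) (by norm_num)
    have hxm : (-1:ℝ) < x := lt_of_lt_of_le (by norm_num) hx.1
    exact (hasDerivAt_hFun hxm hx1).hasDerivWithinAt
  have bd : ∀ x ∈ Set.Icc (0:ℝ) s, ‖4 * x * (Real.arcsin x - x)‖ ≤ 8 * s^4 := by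
    intro x hx
    have h2 := arcsin_taylor hx.1 (hx.2.trans h1)
    rw [Real.norm_eq_abs, abs_mul, abs_of_nonneg (by nlinarith [hx.1] : (0:ℝ) ≤ 4 * x)]
    have : 4 * x * |Real.arcsin x - x| ≤ 4 * x * (2 * x^3) :=
      mul_le_mul_of_nonneg_left h2 (by nlinarith [hx.1])
    nlinarith [hx.1, hx.2, pow_le_pow_left₀ hx.1 hx.2 4]
  have h := Convex.norm_image_sub_le_of_norm_hasDerivWithin_le key bd (convex_Icc 0 s)
    (Set.left_mem_Icc.mpr h0) (Set.right_mem_Icc.mpr h0)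
  have h0' : hFun 0 = 0 := by simp [hFun]
  rw [h0', sub_zero, Real.norm_eq_abs, Real.norm_eq_abs, sub_zero, abs_of_nonneg h0] at h
  calc |hFun s| ≤ 8 * s^4 * s := h
  _ = 8 * s^5 := by ring

/-- for small `ε`, `f(ε) = ε − (4/3π) ε^{3/2} + O(ε^{5/2})`. -/
theorem stmt10 :
    ∃ δ : ℝ, 0 < δ ∧ ∃ C : ℝ, 0 < C ∧ ∀ ε : ℝ, 0 < ε → ε ≤ δ →
      |reluEpsMap ε - (ε - 4 / (3 * Real.pi) * ε ^ ((3 : ℝ) / 2))| ≤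
        C * ε ^ ((5 : ℝ) / 2) := by
  refine ⟨1/4, by norm_num, 8, by norm_num, fun ε hε hε' => ?_⟩
  set s := Real.sqrt ε with hs
  have hs0 : 0 < s := Real.sqrt_pos.mpr hε
  have hs2 : s^2 = ε := Real.sq_sqrt hε.le
  have hsle : s ≤ 1/2 := by
    rw [hs, show (1:ℝ)/2 = Real.sqrt (1/4) by rw [show (1:ℝ)/4 = (1/2)^2 by norm_num, Real.sqrt_sq]; norm_num]
    exact Real.sqrt_le_sqrt hε'
  have hrpow : ∀ n : ℕ, ε ^ ((n : ℝ) / 2) = s ^ n := by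
    intro n
    rw [hs, Real.sqrt_eq_rpow, ← Real.rpow_natCast (ε ^ ((1:ℝ)/2)) n, ← Real.rpow_mul hε.le]
    ring_nf
  have h32 : ε ^ ((3:ℝ)/2) = s ^ 3 := by simpa using hrpow 3
  have h52 : ε ^ ((5:ℝ)/2) = s ^ 5 := by simpa using hrpow 5
  have hprod : Real.sqrt (ε * (1 - ε)) = s * Real.sqrt (1 - s^2) := by
    rw [hs2, Real.sqrt_mul hε.le, hs]
  have hpi : Real.pi ≠ 0 := Real.pi_ne_zero
  have hkey : reluEpsMap ε - (ε - 4 / (3 * Real.pi) * ε ^ ((3:ℝ)/2)) = -(1/Real.pi) * hFun s := by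
    rw [reluEpsMap, hprod, h32, Real.arccos_eq_pi_div_two_sub_arcsin, ← hs2, hFun]
    field_simp
    rw [Real.sqrt_sq hs0.le]
    ring
  rw [hkey, abs_mul, abs_neg, abs_of_nonneg (by positivity : (0:ℝ) ≤ 1/Real.pi), h52]
  have hb := hFun_bound hs0.le hsle
  have hpi1 : 1/Real.pi ≤ 1 := by
    rw [div_le_one Real.pi_pos]; linarith [Real.pi_gt_three]
  calc 1/Real.pi * |hFun s| ≤ 1 * (8 * s^5) := by
        apply mul_le_mul hpi1 hb (abs_nonneg _) (by norm_num)
  _ = 8 * s^5 := by ring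
end

section
/- Let $K^{(\ell)}$ satisfy $K^{(\ell)} = \frac{1}{a\ell}(1 + O(\ell^{-1}))$ and consider the recursion $\kappa^{(\ell+1)} = \frac{2}{n}(K^{(\ell)})^2 (1 + O(\ell^{-1})) + (\chi_{\|}^{(\ell)})^2 \kappa^{(\ell)}$ with $\kappa^{(1)} = 0$, where $\chi_{\|}^{(\ell)} = 1 - \frac{2}{\ell} + O(\ell^{-2})$. Then $\kappa^{(\ell)} = \frac{2}{3 n \ell a^2}(1 + O(\ell^{-1}))$, i.e., $\kappa^{(\ell)} = \frac{2\ell}{3n}(K^{(\ell)})^2 (1 + O(\ell^{-1}))$. -/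
set_option maxHeartbeats 1000000



private lemma stmt14_rem (N a L k c ee x y CK Cχ Ce : ℝ)
    (hN : 1 ≤ N) (ha : 0 < a) (hL : 1 ≤ L)
    (hCK : 0 ≤ CK) (hCχ : 0 ≤ Cχ) (hCe : 0 ≤ Ce)
    (hk : |k - 1 / (a * L)| ≤ CK / L ^ 2)
    (hc : |c - (1 - 2 / L)| ≤ Cχ / L ^ 2)
    (hee : |ee| ≤ Ce / L)
    (hy : y = 2 / N * k ^ 2 * (1 + ee) + c ^ 2 * x) :
    |y - 2 / (3 * N * (L + 1) * a ^ 2) - c ^ 2 * (x - 2 / (3 * N * L * a ^ 2))|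
      ≤ (2 * CK * ((1/a + CK) + 1 / a) + 2 * (1/a + CK) ^ 2 * Ce
          + 2 * Cχ * (2 + Cχ) / (3 * a ^ 2) + 10 / (3 * a ^ 2)) / (N * L ^ 3) := by
  set A : ℝ := 1 / a + CK with hA
  have hA0 : 0 < A := by positivity
  have hN0 : (0:ℝ) < N := by linarith
  have hL0 : (0:ℝ) < L := by linarith
  have hrw : y - 2 / (3 * N * (L + 1) * a ^ 2) - c ^ 2 * (x - 2 / (3 * N * L * a ^ 2)) =
      2 / N * (k ^ 2 - 1 / (a * L) ^ 2)
      + 2 / N * k ^ 2 * ee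
      + (c ^ 2 - (1 - 2 / L) ^ 2) * (2 / (3 * N * L * a ^ 2))
      + (2 / (N * (a * L) ^ 2) + (1 - 2 / L) ^ 2 * (2 / (3 * N * L * a ^ 2))
          - 2 / (3 * N * (L + 1) * a ^ 2)) := by
    rw [hy]; ring
  have habs1 : |1 / (a * L)| = 1 / (a * L) := abs_of_pos (by positivity)
  have h4 : CK / L ^ 2 ≤ CK / L := by
    rw [div_le_div_iff₀ (by positivity) hL0]
    nlinarith [mul_nonneg (mul_nonneg hCK hL0.le) (by linarith : (0:ℝ) ≤ L - 1)]
  have hKb : |k| ≤ A / L := by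
    have h2 : |k| ≤ |k - 1 / (a * L)| + |1 / (a * L)| := by
      calc |k| = |(k - 1 / (a * L)) + 1 / (a * L)| := by ring_nf
        _ ≤ _ := abs_add_le _ _
    have h5 : A / L = CK / L + 1 / (a * L) := by rw [hA]; field_simp; ring
    linarith
  have hKsq : |k ^ 2 - 1 / (a * L) ^ 2| ≤ CK * (A + 1 / a) / L ^ 3 := by
    have hfac : k ^ 2 - 1 / (a * L) ^ 2 = (k - 1 / (a * L)) * (k + 1 / (a * L)) := by
      field_simp; ring
    have hsum : |k + 1 / (a * L)| ≤ (A + 1 / a) / L := by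
      have h6 : (A + 1 / a) / L = A / L + 1 / (a * L) := by field_simp
      calc |k + 1 / (a * L)| ≤ |k| + |1 / (a * L)| := abs_add_le _ _
        _ ≤ A / L + 1 / (a * L) := by rw [habs1]; linarith
        _ = (A + 1 / a) / L := h6.symm
    rw [hfac, abs_mul]
    calc |k - 1 / (a * L)| * |k + 1 / (a * L)|
        ≤ (CK / L ^ 2) * ((A + 1 / a) / L) :=
          mul_le_mul hk hsum (abs_nonneg _) (by positivity)
      _ = CK * (A + 1 / a) / L ^ 3 := by ring
  have b1 : |2 / N * (k ^ 2 - 1 / (a * L) ^ 2)| ≤ 2 * CK * (A + 1 / a) / (N * L ^ 3) := by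
    rw [abs_mul, abs_of_pos (show (0:ℝ) < 2 / N by positivity)]
    calc 2 / N * |k ^ 2 - 1 / (a * L) ^ 2|
        ≤ 2 / N * (CK * (A + 1 / a) / L ^ 3) :=
          mul_le_mul_of_nonneg_left hKsq (by positivity)
      _ = 2 * CK * (A + 1 / a) / (N * L ^ 3) := by ring
  have b2 : |2 / N * k ^ 2 * ee| ≤ 2 * A ^ 2 * Ce / (N * L ^ 3) := by
    rw [abs_mul, abs_mul, abs_of_pos (show (0:ℝ) < 2 / N by positivity), abs_pow]
    have hK2 : |k| ^ 2 ≤ (A / L) ^ 2 := pow_le_pow_left₀ (abs_nonneg _) hKb 2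
    calc 2 / N * |k| ^ 2 * |ee|
        ≤ 2 / N * ((A / L) ^ 2) * (Ce / L) := by
          apply mul_le_mul _ hee (abs_nonneg _) (by positivity)
          exact mul_le_mul_of_nonneg_left hK2 (by positivity)
      _ = 2 * A ^ 2 * Ce / (N * L ^ 3) := by ring
  have h12 : |1 - 2 / L| ≤ 1 := by
    rw [abs_le]
    constructor
    · have : 2 / L ≤ 2 := by rw [div_le_iff₀ hL0]; nlinarith
      linarith
    · have : 0 ≤ 2 / L := by positivity
      linarith
  have hχabs : |c| ≤ 1 + Cχ := by
    have hcc : Cχ / L ^ 2 ≤ Cχ := by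
      rw [div_le_iff₀ (by positivity)]
      nlinarith [mul_nonneg hCχ (by nlinarith : (0:ℝ) ≤ L ^ 2 - 1)]
    calc |c| = |(c - (1 - 2 / L)) + (1 - 2 / L)| := by ring_nf
      _ ≤ |c - (1 - 2 / L)| + |1 - 2 / L| := abs_add_le _ _
      _ ≤ Cχ / L ^ 2 + 1 := by linarith
      _ ≤ 1 + Cχ := by linarith
  have b3 : |(c ^ 2 - (1 - 2 / L) ^ 2) * (2 / (3 * N * L * a ^ 2))|
      ≤ 2 * Cχ * (2 + Cχ) / (3 * a ^ 2) / (N * L ^ 3) := by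
    have hfac : c ^ 2 - (1 - 2 / L) ^ 2 = (c - (1 - 2 / L)) * (c + (1 - 2 / L)) := by ring
    have hsum : |c + (1 - 2 / L)| ≤ 2 + Cχ := by
      calc |c + (1 - 2 / L)| ≤ |c| + |1 - 2 / L| := abs_add_le _ _
        _ ≤ (1 + Cχ) + 1 := by linarith
        _ = 2 + Cχ := by ring
    have hsq : |c ^ 2 - (1 - 2 / L) ^ 2| ≤ (Cχ / L ^ 2) * (2 + Cχ) := by
      rw [hfac, abs_mul]
      exact mul_le_mul hc hsum (abs_nonneg _) (by positivity)
    rw [abs_mul, abs_of_pos (show (0:ℝ) < 2 / (3 * N * L * a ^ 2) by positivity)]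
    calc |c ^ 2 - (1 - 2 / L) ^ 2| * (2 / (3 * N * L * a ^ 2))
        ≤ ((Cχ / L ^ 2) * (2 + Cχ)) * (2 / (3 * N * L * a ^ 2)) :=
          mul_le_mul_of_nonneg_right hsq (by positivity)
      _ = 2 * Cχ * (2 + Cχ) / (3 * a ^ 2) / (N * L ^ 3) := by
          field_simp
  have b4 : |2 / (N * (a * L) ^ 2) + (1 - 2 / L) ^ 2 * (2 / (3 * N * L * a ^ 2))
      - 2 / (3 * N * (L + 1) * a ^ 2)| ≤ 10 / (3 * a ^ 2) / (N * L ^ 3) := by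
    have hL1 : (0:ℝ) < L + 1 := by linarith
    have he4 : 2 / (N * (a * L) ^ 2) + (1 - 2 / L) ^ 2 * (2 / (3 * N * L * a ^ 2))
        - 2 / (3 * N * (L + 1) * a ^ 2)
        = (2 / (3 * N * a ^ 2)) * (4 / L ^ 3 - 1 / (L ^ 2 * (L + 1))) := by
      field_simp
      ring
    rw [he4, abs_mul, abs_of_pos (show (0:ℝ) < 2 / (3 * N * a ^ 2) by positivity)]
    have habs : |4 / L ^ 3 - 1 / (L ^ 2 * (L + 1))| ≤ 5 / L ^ 3 := by
      rw [abs_le]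
      constructor
      · have h7 : 1 / (L ^ 2 * (L + 1)) ≤ 1 / L ^ 3 := by
          rw [div_le_div_iff₀ (by positivity) (by positivity)]
          nlinarith
        have h8 : (0:ℝ) ≤ 1 / L ^ 3 := by positivity
        have h9 : -(5 / L ^ 3) = -5 * (1 / L ^ 3) := by ring
        have h10 : 4 / L ^ 3 = 4 * (1 / L ^ 3) := by ring
        rw [h9, h10]
        linarith
      · have h9 : (0:ℝ) < 1 / (L ^ 2 * (L + 1)) := by positivity
        have h10 : 4 / L ^ 3 ≤ 5 / L ^ 3 := by gcongr <;> norm_num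
        linarith
    calc 2 / (3 * N * a ^ 2) * |4 / L ^ 3 - 1 / (L ^ 2 * (L + 1))|
        ≤ 2 / (3 * N * a ^ 2) * (5 / L ^ 3) :=
          mul_le_mul_of_nonneg_left habs (by positivity)
      _ = 10 / (3 * a ^ 2) / (N * L ^ 3) := by ring
  rw [hrw]
  have hsum : (2 * CK * (A + 1 / a) + 2 * A ^ 2 * Ce
      + 2 * Cχ * (2 + Cχ) / (3 * a ^ 2) + 10 / (3 * a ^ 2)) / (N * L ^ 3)
      = 2 * CK * (A + 1 / a) / (N * L ^ 3) + 2 * A ^ 2 * Ce / (N * L ^ 3)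
      + 2 * Cχ * (2 + Cχ) / (3 * a ^ 2) / (N * L ^ 3)
      + 10 / (3 * a ^ 2) / (N * L ^ 3) := by ring
  rw [hsum]
  refine le_trans (abs_add_le _ _) ?_
  refine le_trans (add_le_add_left (abs_add_le _ _) _) ?_
  refine le_trans (add_le_add_left (add_le_add_left (abs_add_le _ _) _) _) ?_
  exact add_le_add (add_le_add (add_le_add b1 b2) b3) b4

private lemma stmt14_poly (L D C3 : ℝ) (hL : 4 ≤ L) (hC3 : 0 ≤ C3) (hD : 2 * C3 ≤ D) :
    ((1 - 15 / (8 * L)) ^ 2 * D * L + C3) * (L + 1) ^ 2 ≤ D * L ^ 3 := by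
  have hL0 : (0:ℝ) < L := by linarith
  have hD0 : 0 ≤ D := by linarith
  have e1 : 1 - 15 / (8 * L) = (8 * L - 15) / (8 * L) := by field_simp
  rw [e1, div_pow]
  rw [div_mul_eq_mul_div, div_mul_eq_mul_div, div_add' _ _ _ (by positivity),
    div_mul_eq_mul_div, div_le_iff₀ (by positivity)]
  nlinarith [mul_nonneg (mul_nonneg hD0 hL0.le) (sq_nonneg (L+1)),
    mul_nonneg (mul_nonneg (sub_nonneg.2 hD) hL0.le) (sq_nonneg (L+1)),
    sq_nonneg L, mul_pos hL0 hL0, sq_nonneg (L-4),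
    mul_nonneg (mul_nonneg hD0 (sq_nonneg (L-4))) hL0.le]

private lemma stmt14_step (N L c D C3 : ℝ) (hN : 1 ≤ N) (hL : 4 ≤ L)
    (hc : |c| ≤ 1 - 15 / (8 * L)) (hC3 : 0 ≤ C3) (hD : 2 * C3 ≤ D) :
    c ^ 2 * (D / (N * L ^ 2)) + C3 / (N * L ^ 3) ≤ D / (N * (L + 1) ^ 2) := by
  have hN0 : (0:ℝ) < N := lt_of_lt_of_le one_pos hN
  have hL0 : (0:ℝ) < L := by linarith
  have hD0 : 0 ≤ D := by linarith
  have hc2 : c ^ 2 ≤ (1 - 15 / (8 * L)) ^ 2 := by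
    calc c ^ 2 = |c| ^ 2 := (sq_abs c).symm
      _ ≤ (1 - 15 / (8 * L)) ^ 2 := pow_le_pow_left₀ (abs_nonneg _) hc 2
  have key := stmt14_poly L D C3 hL hC3 hD
  have h1 : c ^ 2 * (D / (N * L ^ 2)) + C3 / (N * L ^ 3)
      ≤ ((1 - 15 / (8 * L)) ^ 2 * D * L + C3) / (N * L ^ 3) := by
    have e : ((1 - 15 / (8 * L)) ^ 2 * D * L + C3) / (N * L ^ 3)
        = (1 - 15 / (8 * L)) ^ 2 * (D / (N * L ^ 2)) + C3 / (N * L ^ 3) := by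
      field_simp
    rw [e]
    have h2 : c ^ 2 * (D / (N * L ^ 2)) ≤ (1 - 15 / (8 * L)) ^ 2 * (D / (N * L ^ 2)) :=
      mul_le_mul_of_nonneg_right hc2 (by positivity)
    linarith
  refine h1.trans ?_
  rw [div_le_div_iff₀ (by positivity) (by positivity)]
  calc ((1 - 15 / (8 * L)) ^ 2 * D * L + C3) * (N * (L + 1) ^ 2)
      = N * (((1 - 15 / (8 * L)) ^ 2 * D * L + C3) * (L + 1) ^ 2) := by ring
    _ ≤ N * (D * L ^ 3) := mul_le_mul_of_nonneg_left key hN0.le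
    _ = D * (N * L ^ 3) := by ring

/-- leading-order solution of the fourth-cumulant recursion in the
`K⋆ = 0` universality class.  If `K^{(ℓ)} = (aℓ)⁻¹ (1 + O(ℓ⁻¹))`,
`χ_∥^{(ℓ)} = 1 − 2/ℓ + O(ℓ⁻²)`, `κ^{(1)} = 0` and
`κ^{(ℓ+1)} = (2/n) (K^{(ℓ)})² (1 + O(ℓ⁻¹)) + (χ_∥^{(ℓ)})² κ^{(ℓ)}`, then
`κ^{(ℓ)} = 2/(3 n ℓ a²) (1 + O(ℓ⁻¹))`, i.e. `κ^{(ℓ)} = (2ℓ/3n)(K^{(ℓ)})²(1+O(ℓ⁻¹))`. -/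
theorem stmt14 (a : ℝ) (ha : 0 < a) (n : ℕ) (hn : 1 ≤ n)
    (K χ κ e : ℕ → ℝ) (CK Cχ Ce : ℝ)
    (hK : ∀ ℓ : ℕ, 1 ≤ ℓ → |K ℓ - 1 / (a * ℓ)| ≤ CK / (ℓ : ℝ) ^ 2)
    (hχ : ∀ ℓ : ℕ, 1 ≤ ℓ → |χ ℓ - (1 - 2 / (ℓ : ℝ))| ≤ Cχ / (ℓ : ℝ) ^ 2)
    (he : ∀ ℓ : ℕ, 1 ≤ ℓ → |e ℓ| ≤ Ce / (ℓ : ℝ))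
    (hκ1 : κ 1 = 0)
    (hrec : ∀ ℓ : ℕ, 1 ≤ ℓ →
      κ (ℓ + 1) = 2 / (n : ℝ) * (K ℓ) ^ 2 * (1 + e ℓ) + (χ ℓ) ^ 2 * κ ℓ) :
    ∃ D : ℝ, ∀ ℓ : ℕ, 1 ≤ ℓ →
      |κ ℓ - 2 / (3 * (n : ℝ) * (ℓ : ℝ) * a ^ 2)| ≤ D / ((n : ℝ) * (ℓ : ℝ) ^ 2) := by
  have hN : (1:ℝ) ≤ (n:ℝ) := by exact_mod_cast hn
  have hN0 : (0:ℝ) < (n:ℝ) := by linarith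
  have hCK : 0 ≤ CK := by
    have h := hK 1 le_rfl
    norm_num at h
    exact le_trans (abs_nonneg _) h
  have hCχ : 0 ≤ Cχ := by
    have h := hχ 1 le_rfl
    norm_num at h
    exact le_trans (abs_nonneg _) h
  have hCe : 0 ≤ Ce := by
    have h := he 1 le_rfl
    norm_num at h
    exact le_trans (abs_nonneg _) h
  set C3 : ℝ := 2 * CK * ((1/a + CK) + 1 / a) + 2 * (1/a + CK) ^ 2 * Ce
    + 2 * Cχ * (2 + Cχ) / (3 * a ^ 2) + 10 / (3 * a ^ 2) with hC3
  have hC30 : 0 ≤ C3 := by positivity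
  set ℓ₀ : ℕ := max 4 (Nat.ceil (8 * Cχ + 8)) with hℓ₀
  have hℓ₀4 : 4 ≤ ℓ₀ := le_max_left _ _
  have hℓ₀1 : 1 ≤ ℓ₀ := by omega
  have hne : (Finset.Icc 1 ℓ₀).Nonempty := ⟨1, Finset.mem_Icc.mpr ⟨le_rfl, hℓ₀1⟩⟩
  set D : ℝ := max (2 * C3)
    ((Finset.Icc 1 ℓ₀).sup' hne fun j : ℕ => (n:ℝ) * (j:ℝ) ^ 2
      * |κ j - 2 / (3 * (n:ℝ) * (j:ℝ) * a ^ 2)|) with hD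
  have hD2 : 2 * C3 ≤ D := le_max_left _ _
  have hD0 : 0 ≤ D := le_trans (by linarith) hD2
  refine ⟨D, ?_⟩
  have base : ∀ j : ℕ, 1 ≤ j → j ≤ ℓ₀ →
      |κ j - 2 / (3 * (n:ℝ) * (j:ℝ) * a ^ 2)| ≤ D / ((n:ℝ) * (j:ℝ) ^ 2) := by
    intro j h1 h2
    have hj0 : (0:ℝ) < (j:ℝ) := by exact_mod_cast h1
    have hmem : j ∈ Finset.Icc 1 ℓ₀ := Finset.mem_Icc.mpr ⟨h1, h2⟩
    have hle : (n:ℝ) * (j:ℝ) ^ 2 * |κ j - 2 / (3 * (n:ℝ) * (j:ℝ) * a ^ 2)| ≤ D :=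
      le_trans (Finset.le_sup' (fun j : ℕ => (n:ℝ) * (j:ℝ) ^ 2
        * |κ j - 2 / (3 * (n:ℝ) * (j:ℝ) * a ^ 2)|) hmem) (le_max_right _ _)
    rw [le_div_iff₀ (by positivity)]
    calc |κ j - 2 / (3 * (n:ℝ) * (j:ℝ) * a ^ 2)| * ((n:ℝ) * (j:ℝ) ^ 2)
        = (n:ℝ) * (j:ℝ) ^ 2 * |κ j - 2 / (3 * (n:ℝ) * (j:ℝ) * a ^ 2)| := by ring
      _ ≤ D := hle
  have step : ∀ j : ℕ, ℓ₀ ≤ j →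
      |κ j - 2 / (3 * (n:ℝ) * (j:ℝ) * a ^ 2)| ≤ D / ((n:ℝ) * (j:ℝ) ^ 2) →
      |κ (j+1) - 2 / (3 * (n:ℝ) * ((j+1:ℕ):ℝ) * a ^ 2)| ≤ D / ((n:ℝ) * ((j+1:ℕ):ℝ) ^ 2) := by
    intro j hj ih
    have h1j : 1 ≤ j := le_trans hℓ₀1 hj
    have hL1 : (1:ℝ) ≤ (j:ℝ) := by exact_mod_cast h1j
    have hL0 : (0:ℝ) < (j:ℝ) := by linarith
    have hL4 : (4:ℝ) ≤ (j:ℝ) := by exact_mod_cast le_trans hℓ₀4 hj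
    have hLχ : 8 * Cχ + 8 ≤ (j:ℝ) := by
      have h1 : (8 * Cχ + 8 : ℝ) ≤ (Nat.ceil (8 * Cχ + 8) : ℝ) := Nat.le_ceil _
      have h2 : (Nat.ceil (8 * Cχ + 8) : ℝ) ≤ (ℓ₀ : ℝ) := by
        exact_mod_cast le_max_right 4 (Nat.ceil (8 * Cχ + 8))
      have h3 : ((ℓ₀ : ℕ) : ℝ) ≤ (j:ℝ) := by exact_mod_cast hj
      linarith
    -- remainder bound at j
    have hrj := stmt14_rem (n:ℝ) a (j:ℝ) (K j) (χ j) (e j) (κ j) (κ (j+1)) CK Cχ Ce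
      hN ha hL1 hCK hCχ hCe (hK j h1j) (hχ j h1j) (he j h1j) (hrec j h1j)
    rw [← hC3] at hrj
    -- χ bound at j
    have h2L : 2 / (j:ℝ) ≤ 1 := by rw [div_le_one hL0]; linarith
    have hb : |χ j| ≤ 1 - 15 / (8 * (j:ℝ)) := by
      have habs2 : |1 - 2 / (j:ℝ)| = 1 - 2 / (j:ℝ) := abs_of_nonneg (by linarith)
      have hq : Cχ / (j:ℝ) ^ 2 ≤ 1 / (8 * (j:ℝ)) := by
        rw [div_le_div_iff₀ (by positivity) (by positivity)]
        nlinarith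
      have hid : 1 / (8 * (j:ℝ)) + (1 - 2 / (j:ℝ)) = 1 - 15 / (8 * (j:ℝ)) := by
        field_simp; ring
      calc |χ j| = |(χ j - (1 - 2 / (j:ℝ))) + (1 - 2 / (j:ℝ))| := by ring_nf
        _ ≤ |χ j - (1 - 2 / (j:ℝ))| + |1 - 2 / (j:ℝ)| := abs_add_le _ _
        _ ≤ Cχ / (j:ℝ) ^ 2 + (1 - 2 / (j:ℝ)) := by rw [habs2]; exact add_le_add_left (hχ j h1j) _
        _ ≤ 1 / (8 * (j:ℝ)) + (1 - 2 / (j:ℝ)) := by linarith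
        _ = 1 - 15 / (8 * (j:ℝ)) := hid
    have key := stmt14_step (n:ℝ) (j:ℝ) (χ j) D C3 hN hL4 hb hC30 hD2
    have hcast : ((j+1:ℕ):ℝ) = (j:ℝ) + 1 := by push_cast; ring
    rw [hcast]
    have hsq : |(χ j) ^ 2 * (κ j - 2 / (3 * (n:ℝ) * (j:ℝ) * a ^ 2))|
        ≤ (χ j) ^ 2 * (D / ((n:ℝ) * (j:ℝ) ^ 2)) := by
      rw [abs_mul, abs_of_nonneg (sq_nonneg (χ j))]
      exact mul_le_mul_of_nonneg_left ih (sq_nonneg _)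
    calc |κ (j+1) - 2 / (3 * (n:ℝ) * ((j:ℝ) + 1) * a ^ 2)|
        = |(κ (j+1) - 2 / (3 * (n:ℝ) * ((j:ℝ) + 1) * a ^ 2)
            - (χ j) ^ 2 * (κ j - 2 / (3 * (n:ℝ) * (j:ℝ) * a ^ 2)))
            + (χ j) ^ 2 * (κ j - 2 / (3 * (n:ℝ) * (j:ℝ) * a ^ 2))| := by ring_nf
      _ ≤ |κ (j+1) - 2 / (3 * (n:ℝ) * ((j:ℝ) + 1) * a ^ 2)
            - (χ j) ^ 2 * (κ j - 2 / (3 * (n:ℝ) * (j:ℝ) * a ^ 2))|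
            + |(χ j) ^ 2 * (κ j - 2 / (3 * (n:ℝ) * (j:ℝ) * a ^ 2))| := abs_add_le _ _
      _ ≤ C3 / ((n:ℝ) * (j:ℝ) ^ 3) + (χ j) ^ 2 * (D / ((n:ℝ) * (j:ℝ) ^ 2)) :=
          add_le_add hrj hsq
      _ ≤ D / ((n:ℝ) * ((j:ℝ) + 1) ^ 2) := by linarith
  have all : ∀ j : ℕ, ℓ₀ ≤ j →
      |κ j - 2 / (3 * (n:ℝ) * (j:ℝ) * a ^ 2)| ≤ D / ((n:ℝ) * (j:ℝ) ^ 2) := by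
    intro j hj
    induction j, hj using Nat.le_induction with
    | base => exact base ℓ₀ hℓ₀1 le_rfl
    | succ m hm ih => exact step m hm ih
  intro ℓ hℓ
  rcases le_or_gt ℓ ℓ₀ with h | h
  · exact base ℓ hℓ h
  · exact all ℓ h.le
end
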